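/- arXiv:1010.0526 — 2 statements merged into one kernel-verified Lean document; each statement's English description precedes it below -/
import Mathlib

section
/- Let m ∈ (0,1) and let a = (a₁,a₂) ∈ ℤ² with a₂ ≥ a₁ ≥ 0 and a ≠ 0. Let (X_n) be simple random walk on ℤ² started at a, let τ be the hitting time of 0, and on {τ < ∞} let T be the largest time n < τ with X_n on the line Δ = {(x,y) ∈ ℤ² : y = −x}, setting T = ∞ if no such time exists. Then E^a[ m^τ · 1_{τ<∞} · 1_{X_{τ−1} ∈ {(−1,0),(0,−1)}} ] − E^a[ m^τ · 1_{τ<∞} · 1_{X_{τ−1} ∈ {(0,1),(1,0)}} ] = − E^a[ m^τ · 1_{τ<∞} · 1_{T=∞} ]. -/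
open scoped Classical BigOperators

noncomputable section

/-- A site of the square lattice `ℤ²`. -/
abbrev Site := ℤ × ℤ

/-- One step of the simple random walk: `v` is a nearest neighbour of `u`. -/
def stepRel (u v : Site) : Prop :=
  v = u + (1, 0) ∨ v = u - (1, 0) ∨ v = u + (0, 1) ∨ v = u - (0, 1)

/-- Nearest-neighbour paths of length `n` started at `a` which hit `0` for the first
time at time `n`, and satisfy the additional constraint `P`.  Summing `(1/4)^n` over
these paths computes expectations of the simple random walk at its hitting time of `0`. -/
def hitPaths (a : Site) (n : ℕ) (P : (Fin (n + 1) → Site) → Prop) : Set (Fin (n + 1) → Site) :=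
  {f | f 0 = a ∧ (∀ i : Fin n, stepRel (f i.castSucc) (f i.succ)) ∧
    f (Fin.last n) = 0 ∧ (∀ i : Fin n, f i.castSucc ≠ 0) ∧ P f}

/-- `E^a[m^τ · 1_{τ<∞} · 1_P]`, where `τ` is the hitting time of `0` by the simple random
walk started at `a`, written as a sum over paths. -/
def hitExp (m : ℝ) (a : Site) (P : ∀ n : ℕ, (Fin (n + 1) → Site) → Prop) : ℝ :=
  ∑' n : ℕ, m ^ n * (1 / 4) ^ n * ((hitPaths a n (P n)).ncard : ℝ)

/-- The constraint `X_{τ-1} ∈ S` on the position of the walk one step before hitting `0`. -/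
def lastStepIn (S : Set Site) : ∀ n : ℕ, (Fin (n + 1) → Site) → Prop :=
  fun n f => ∃ k : Fin n, (k : ℕ) + 1 = n ∧ f k.castSucc ∈ S

/-- The constraint `T = ∞`: the walk does not visit the line `Δ = {y = -x}` at any
time `< τ` (so there is no last visit of `Δ` before `τ`). -/
def noVisitDelta : ∀ n : ℕ, (Fin (n + 1) → Site) → Prop :=
  fun n f => ∀ i : Fin n, (f i.castSucc).2 ≠ -(f i.castSucc).1

def rfl2 (p : Site) : Site := (-p.2, -p.1)

lemma rfl2_rfl2 (p : Site) : rfl2 (rfl2 p) = p := by simp [rfl2]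

lemma rfl2_eq_zero {p : Site} : rfl2 p = 0 ↔ p = 0 := by
  simp [rfl2, Prod.ext_iff]; omega

lemma rfl2_diag {p : Site} : (rfl2 p).2 = -(rfl2 p).1 ↔ p.2 = -p.1 := by
  simp [rfl2]; omega

lemma rfl2_fix {p : Site} (h : p.2 = -p.1) : rfl2 p = p := by
  simp [rfl2, Prod.ext_iff]; omega

lemma rfl2_step {u v : Site} (h : stepRel u v) : stepRel (rfl2 u) (rfl2 v) := by
  rcases h with h | h | h | h <;> subst h <;>
    simp [stepRel, rfl2, Prod.ext_iff] <;> omega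

def Tm (n : ℕ) (f : Fin (n + 1) → Site) : ℕ :=
  Nat.findGreatest (fun t => ∃ h : t < n,
    (f ((⟨t, h⟩ : Fin n).castSucc)).2 = -(f ((⟨t, h⟩ : Fin n).castSucc)).1) n

def Phi (n : ℕ) (f : Fin (n + 1) → Site) : Fin (n + 1) → Site :=
  fun j => if (j : ℕ) ≤ Tm n f then f j else rfl2 (f j)

lemma findGreatest_congr {P Q : ℕ → Prop} [DecidablePred P] [DecidablePred Q]
    (h : ∀ t, P t ↔ Q t) : ∀ n, Nat.findGreatest P n = Nat.findGreatest Q n := by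
  intro n
  induction n with
  | zero => rfl
  | succ k ih =>
      rw [Nat.findGreatest_succ, Nat.findGreatest_succ, ih]
      by_cases hq : Q (k + 1)
      · rw [if_pos ((h _).2 hq), if_pos hq]
      · rw [if_neg (fun hp => hq ((h _).1 hp)), if_neg hq]

lemma Tm_spec {n : ℕ} {f : Fin (n + 1) → Site}
    (hv : ∃ i : Fin n, (f i.castSucc).2 = -(f i.castSucc).1) :
    ∃ h : Tm n f < n,
      (f ((⟨Tm n f, h⟩ : Fin n).castSucc)).2 = -(f ((⟨Tm n f, h⟩ : Fin n).castSucc)).1 := by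
  obtain ⟨i, hi⟩ := hv
  exact Nat.findGreatest_spec (P := fun t => ∃ h : t < n,
    (f ((⟨t, h⟩ : Fin n).castSucc)).2 = -(f ((⟨t, h⟩ : Fin n).castSucc)).1)
    (le_of_lt i.isLt) ⟨i.isLt, by simpa using hi⟩

lemma Tm_max {n : ℕ} {f : Fin (n + 1) → Site} {t : ℕ} (h1 : Tm n f < t) (h2 : t < n) :
    ¬ (f ((⟨t, h2⟩ : Fin n).castSucc)).2 = -(f ((⟨t, h2⟩ : Fin n).castSucc)).1 := by
  intro hd
  exact Nat.findGreatest_is_greatest (P := fun t => ∃ h : t < n,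
    (f ((⟨t, h⟩ : Fin n).castSucc)).2 = -(f ((⟨t, h⟩ : Fin n).castSucc)).1)
    h1 (le_of_lt h2) ⟨h2, hd⟩

lemma Tm_phi (n : ℕ) (f : Fin (n + 1) → Site) : Tm n (Phi n f) = Tm n f := by
  apply findGreatest_congr
  intro t
  constructor
  · rintro ⟨h, hd⟩
    refine ⟨h, ?_⟩
    by_cases ht : t ≤ Tm n f
    · simpa [Phi, ht] using hd
    · have : (Phi n f ((⟨t, h⟩ : Fin n).castSucc)) = rfl2 (f ((⟨t, h⟩ : Fin n).castSucc)) := by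
        simp [Phi, ht]
      rw [this] at hd
      exact rfl2_diag.mp hd
  · rintro ⟨h, hd⟩
    refine ⟨h, ?_⟩
    by_cases ht : t ≤ Tm n f
    · simpa [Phi, ht] using hd
    · have : (Phi n f ((⟨t, h⟩ : Fin n).castSucc)) = rfl2 (f ((⟨t, h⟩ : Fin n).castSucc)) := by
        simp [Phi, ht]
      rw [this]
      exact rfl2_diag.mpr hd

lemma phi_phi (n : ℕ) (f : Fin (n + 1) → Site) : Phi n (Phi n f) = f := by
  funext j
  have hTT := Tm_phi n f
  by_cases hj : (j : ℕ) ≤ Tm n f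
  · simp [Phi, hTT, hj]
  · simp [Phi, hTT, hj, rfl2_rfl2]

lemma phi_mem {a : Site} {n : ℕ} {S S' : Set Site}
    (hSd : ∀ p ∈ S, p.2 ≠ -p.1)
    (hSS' : ∀ p ∈ S, rfl2 p ∈ S')
    {f : Fin (n + 1) → Site}
    (hf : f ∈ hitPaths a n (fun g => lastStepIn S n g ∧
      ∃ i : Fin n, (g i.castSucc).2 = -(g i.castSucc).1)) :
    Phi n f ∈ hitPaths a n (fun g => lastStepIn S' n g ∧
      ∃ i : Fin n, (g i.castSucc).2 = -(g i.castSucc).1) := by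
  obtain ⟨hf0, hstep, hlast, hne, ⟨k, hk1, hkS⟩, hvis⟩ := hf
  obtain ⟨hT, hTd⟩ := Tm_spec hvis
  refine ⟨?_, ?_, ?_, ?_, ⟨k, hk1, ?_⟩, ⟨⟨Tm n f, hT⟩, ?_⟩⟩
  · simp [Phi, hf0]
  · intro i
    by_cases h1 : (i : ℕ) ≤ Tm n f
    · by_cases h2 : (i : ℕ) + 1 ≤ Tm n f
      · have e1 : Phi n f i.castSucc = f i.castSucc := by simp [Phi, h1]
        have e2 : Phi n f i.succ = f i.succ := by simp [Phi, h2]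
        rw [e1, e2]; exact hstep i
      · -- i = Tm n f
        have heq : (i : ℕ) = Tm n f := by omega
        have e1 : Phi n f i.castSucc = f i.castSucc := by simp [Phi, h1]
        have e2 : Phi n f i.succ = rfl2 (f i.succ) := by
          simp [Phi]; omega
        have hc : i.castSucc = ((⟨Tm n f, hT⟩ : Fin n).castSucc) := by
          apply Fin.ext; simpa using heq
        have hfix : f i.castSucc = rfl2 (f i.castSucc) := by
          rw [hc]; exact (rfl2_fix hTd).symm
        rw [e1, e2, hfix]
        exact rfl2_step (hstep i)
    · have e1 : Phi n f i.castSucc = rfl2 (f i.castSucc) := by simp [Phi, h1]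
      have e2 : Phi n f i.succ = rfl2 (f i.succ) := by simp [Phi]; omega
      rw [e1, e2]; exact rfl2_step (hstep i)
  · have : ¬ ((Fin.last n : Fin (n + 1)) : ℕ) ≤ Tm n f := by simp; omega
    simp [Phi, this, hlast, rfl2_eq_zero]
  · intro i
    by_cases h1 : (i : ℕ) ≤ Tm n f
    · simpa [Phi, h1] using hne i
    · have e1 : Phi n f i.castSucc = rfl2 (f i.castSucc) := by simp [Phi, h1]
      rw [e1, Ne, rfl2_eq_zero]
      exact hne i
  · -- last step in S'
    have hTk : Tm n f ≠ (k : ℕ) := by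
      intro h
      apply hSd _ hkS
      have hc : ((⟨Tm n f, hT⟩ : Fin n).castSucc) = k.castSucc := by
        apply Fin.ext; simpa using h
      rw [← hc]; exact hTd
    have h1 : ¬ (k : ℕ) ≤ Tm n f := by omega
    have e1 : Phi n f k.castSucc = rfl2 (f k.castSucc) := by simp [Phi, h1]
    rw [e1]
    exact hSS' _ hkS
  · have e1 : Phi n f ((⟨Tm n f, hT⟩ : Fin n).castSucc) =
        f ((⟨Tm n f, hT⟩ : Fin n).castSucc) := by
      simp [Phi]
    rw [e1]; exact hTd

lemma step_sum {u v : Site} (h : stepRel u v) :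
    v.1 + v.2 = u.1 + u.2 + 1 ∨ v.1 + v.2 = u.1 + u.2 - 1 := by
  rcases h with h | h | h | h <;> subst h <;> simp <;> omega

lemma step_neighbor {u : Site} (h : stepRel u 0) :
    u = (-1, 0) ∨ u = (1, 0) ∨ u = (0, -1) ∨ u = (0, 1) := by
  rcases h with h | h | h | h <;> rw [Prod.ext_iff] at h <;>
    simp at h <;> simp [Prod.ext_iff] <;> omega

lemma pos_sum {a : Site} {n : ℕ} {f : Fin (n + 1) → Site}
    (ha : 0 < a.1 + a.2) (hf0 : f 0 = a)
    (hstep : ∀ i : Fin n, stepRel (f i.castSucc) (f i.succ))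
    (hno : ∀ i : Fin n, (f i.castSucc).2 ≠ -(f i.castSucc).1) :
    ∀ i : Fin n, 0 < (f i.castSucc).1 + (f i.castSucc).2 := by
  have H : ∀ j : ℕ, ∀ h : j < n,
      0 < (f ⟨j, h.trans n.lt_succ_self⟩).1 + (f ⟨j, h.trans n.lt_succ_self⟩).2 := by
    intro j
    induction j with
    | zero =>
        intro h
        have h0 : (⟨0, h.trans n.lt_succ_self⟩ : Fin (n + 1)) = 0 := rfl
        rw [h0, hf0]; exact ha
    | succ j ih =>
        intro h
        have hj : j < n := by omega
        have hs := hstep ⟨j, hj⟩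
        have hno' := hno ⟨j + 1, h⟩
        have hcs : ((⟨j, hj⟩ : Fin n).castSucc) = ⟨j, hj.trans n.lt_succ_self⟩ := rfl
        have hss : ((⟨j, hj⟩ : Fin n).succ) = ⟨j + 1, h.trans n.lt_succ_self⟩ := rfl
        have hcs' : ((⟨j + 1, h⟩ : Fin n).castSucc) = ⟨j + 1, h.trans n.lt_succ_self⟩ := rfl
        rw [hcs, hss] at hs
        rw [hcs'] at hno'
        have := step_sum hs
        have := ih hj
        omega
  intro i
  have := H i.1 i.isLt
  have hc : i.castSucc = ⟨i.1, i.isLt.trans n.lt_succ_self⟩ := rfl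
  rw [hc]
  exact this

def Dset : Finset Site := {(1, 0), (-1, 0), (0, 1), (0, -1)}

lemma step_sub {u v : Site} (h : stepRel u v) : v - u ∈ Dset := by
  rcases h with h | h | h | h <;> subst h <;> simp [Dset, Prod.ext_iff]

def walks (a : Site) (n : ℕ) : Set (Fin (n + 1) → Site) :=
  {f | f 0 = a ∧ ∀ i : Fin n, stepRel (f i.castSucc) (f i.succ)}

def psi (n : ℕ) (f : Fin (n + 1) → Site) : Fin n → Dset :=
  fun i => if h : (f i.succ - f i.castSucc) ∈ Dset then ⟨_, h⟩ else ⟨(1, 0), by decide⟩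

lemma psi_injOn (a : Site) (n : ℕ) : Set.InjOn (psi n) (walks a n) := by
  intro f hf g hg hfg
  funext j
  induction j using Fin.induction with
  | zero => rw [hf.1, hg.1]
  | succ i ih =>
      have h1 := congrFun hfg i
      rw [psi, psi] at h1
      simp only [dif_pos (step_sub (hf.2 i)), dif_pos (step_sub (hg.2 i))] at h1
      have h2 : f i.succ - f i.castSucc = g i.succ - g i.castSucc := by
        exact congrArg Subtype.val h1
      rw [ih] at h2
      exact sub_left_inj.mp h2

lemma walks_finite (a : Site) (n : ℕ) : (walks a n).Finite := by
  apply Set.Finite.of_finite_image (Set.toFinite _) (psi_injOn a n)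

lemma hitPaths_finite (a : Site) (n : ℕ) (P : (Fin (n + 1) → Site) → Prop) :
    (hitPaths a n P).Finite :=
  (walks_finite a n).subset (fun f hf => ⟨hf.1, hf.2.1⟩)

lemma hitPaths_ncard_le (a : Site) (n : ℕ) (P : (Fin (n + 1) → Site) → Prop) :
    (hitPaths a n P).ncard ≤ 4 ^ n := by
  have h1 : (hitPaths a n P).ncard ≤ (walks a n).ncard :=
    Set.ncard_le_ncard (fun f hf => ⟨hf.1, hf.2.1⟩) (walks_finite a n)
  have h2 : (walks a n).ncard ≤ (Set.univ : Set (Fin n → Dset)).ncard :=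
    Set.ncard_le_ncard_of_injOn (psi n) (fun f _ => Set.mem_univ _) (psi_injOn a n)
      Set.finite_univ
  have h3 : (Set.univ : Set (Fin n → Dset)).ncard = 4 ^ n := by
    have hD : Dset.card = 4 := by decide
    rw [Set.ncard_univ, Nat.card_eq_fintype_card, Fintype.card_fun, Fintype.card_coe, hD,
      Fintype.card_fin]
  omega

lemma noVisit_last {a : Site} (ha : 0 < a.1 + a.2) (ha0 : a ≠ 0) {n : ℕ}
    {f : Fin (n + 1) → Site} (hf : f ∈ hitPaths a n (noVisitDelta n)) :
    lastStepIn ({((0 : ℤ), (1 : ℤ)), ((1 : ℤ), (0 : ℤ))} : Set Site) n f := by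
  obtain ⟨hf0, hstep, hlast, hne, hnov⟩ := hf
  cases n with
  | zero =>
      exfalso
      apply ha0
      rw [← hf0]
      have : (Fin.last 0 : Fin 1) = 0 := rfl
      rw [← this, hlast]
  | succ nn =>
      refine ⟨⟨nn, Nat.lt_succ_self nn⟩, rfl, ?_⟩
      have hs := hstep ⟨nn, Nat.lt_succ_self nn⟩
      have hsucc : ((⟨nn, Nat.lt_succ_self nn⟩ : Fin (nn + 1)).succ) = Fin.last (nn + 1) :=
        Fin.ext rfl
      rw [hsucc, hlast] at hs
      have hpos := pos_sum ha hf0 hstep hnov ⟨nn, Nat.lt_succ_self nn⟩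
      rcases step_neighbor hs with h | h | h | h <;> rw [h] at hpos ⊢ <;>
        simp at hpos ⊢ <;> omega

lemma key_card (a : Site) (ha : a.1 ≤ a.2 ∧ 0 ≤ a.1) (ha0 : a ≠ 0) (n : ℕ) :
    (hitPaths a n (lastStepIn ({((-1 : ℤ), (0 : ℤ)), ((0 : ℤ), (-1 : ℤ))} : Set Site) n)).ncard
      + (hitPaths a n (noVisitDelta n)).ncard
    = (hitPaths a n (lastStepIn ({((0 : ℤ), (1 : ℤ)), ((1 : ℤ), (0 : ℤ))} : Set Site) n)).ncard := by
  set WS : Set Site := {((-1 : ℤ), (0 : ℤ)), ((0 : ℤ), (-1 : ℤ))} with hWSdef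
  set NE : Set Site := {((0 : ℤ), (1 : ℤ)), ((1 : ℤ), (0 : ℤ))} with hNEdef
  have haSum : 0 < a.1 + a.2 := by
    have h1 : ¬ (a.1 = 0 ∧ a.2 = 0) := fun h => ha0 (Prod.ext_iff.mpr (by simpa using h))
    omega
  have hWSd : ∀ p ∈ WS, p.2 ≠ -p.1 := by
    intro p hp; rcases hp with h | h <;> subst h <;> simp
  have hNEd : ∀ p ∈ NE, p.2 ≠ -p.1 := by
    intro p hp; rcases hp with h | h <;> subst h <;> simp
  have hWSNE : ∀ p ∈ WS, rfl2 p ∈ NE := by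
    intro p hp; rcases hp with h | h <;> subst h <;>
      simp [rfl2, hNEdef, Prod.ext_iff]
  have hNEWS : ∀ p ∈ NE, rfl2 p ∈ WS := by
    intro p hp; rcases hp with h | h <;> subst h <;>
      simp [rfl2, hWSdef, Prod.ext_iff]
  have hA : hitPaths a n (lastStepIn WS n) = hitPaths a n (fun f => lastStepIn WS n f ∧
      ∃ i : Fin n, (f i.castSucc).2 = -(f i.castSucc).1) := by
    ext f
    simp only [hitPaths, Set.mem_setOf_eq]
    constructor
    · rintro ⟨h0, h1, h2, h3, h4⟩
      refine ⟨h0, h1, h2, h3, h4, ?_⟩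
      by_contra hnv
      push_neg at hnv
      obtain ⟨k, hk1, hkS⟩ := h4
      have hpos := pos_sum haSum h0 h1 hnv k
      rcases hkS with h | h <;> rw [h] at hpos <;> simp at hpos
    · rintro ⟨h0, h1, h2, h3, h4, _⟩
      exact ⟨h0, h1, h2, h3, h4⟩
  have hB : hitPaths a n (lastStepIn NE n) = hitPaths a n (fun f => lastStepIn NE n f ∧
      ∃ i : Fin n, (f i.castSucc).2 = -(f i.castSucc).1) ∪ hitPaths a n (noVisitDelta n) := by
    ext f
    simp only [hitPaths, Set.mem_setOf_eq, Set.mem_union]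
    constructor
    · rintro ⟨h0, h1, h2, h3, h4⟩
      by_cases hv : ∃ i : Fin n, (f i.castSucc).2 = -(f i.castSucc).1
      · exact Or.inl ⟨h0, h1, h2, h3, h4, hv⟩
      · push_neg at hv
        exact Or.inr ⟨h0, h1, h2, h3, hv⟩
    · rintro (⟨h0, h1, h2, h3, h4, _⟩ | hC)
      · exact ⟨h0, h1, h2, h3, h4⟩
      · obtain ⟨h0, h1, h2, h3, h4⟩ := hC
        exact ⟨h0, h1, h2, h3, noVisit_last haSum ha0 ⟨h0, h1, h2, h3, h4⟩⟩
  have hdisj : Disjoint (hitPaths a n (fun f => lastStepIn NE n f ∧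
      ∃ i : Fin n, (f i.castSucc).2 = -(f i.castSucc).1)) (hitPaths a n (noVisitDelta n)) := by
    rw [Set.disjoint_left]
    rintro f ⟨_, _, _, _, _, i, hi⟩ hC
    exact hC.2.2.2.2 i hi
  have hbij : (hitPaths a n (fun f => lastStepIn WS n f ∧
      ∃ i : Fin n, (f i.castSucc).2 = -(f i.castSucc).1)).ncard
      = (hitPaths a n (fun f => lastStepIn NE n f ∧
      ∃ i : Fin n, (f i.castSucc).2 = -(f i.castSucc).1)).ncard := by
    have hinj : Set.InjOn (Phi n) (hitPaths a n (fun f => lastStepIn WS n f ∧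
        ∃ i : Fin n, (f i.castSucc).2 = -(f i.castSucc).1)) := by
      intro f _ g _ h
      rw [← phi_phi n f, h, phi_phi n g]
    have himg : Phi n '' (hitPaths a n (fun f => lastStepIn WS n f ∧
        ∃ i : Fin n, (f i.castSucc).2 = -(f i.castSucc).1))
        = hitPaths a n (fun f => lastStepIn NE n f ∧
        ∃ i : Fin n, (f i.castSucc).2 = -(f i.castSucc).1) := by
      apply Set.Subset.antisymm
      · rintro _ ⟨f, hf, rfl⟩
        exact phi_mem hWSd hWSNE hf
      · intro g hg
        exact ⟨Phi n g, phi_mem hNEd hNEWS hg, phi_phi n g⟩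
    rw [← himg, Set.ncard_image_of_injOn hinj]
  rw [hA, hB, Set.ncard_union_eq hdisj (hitPaths_finite _ _ _) (hitPaths_finite _ _ _), hbij]

lemma summable_hit {m : ℝ} (hm : m ∈ Set.Ioo (0 : ℝ) 1) (a : Site)
    (P : ∀ n : ℕ, (Fin (n + 1) → Site) → Prop) :
    Summable (fun n : ℕ => m ^ n * (1 / 4) ^ n * ((hitPaths a n (P n)).ncard : ℝ)) := by
  have hmn : ∀ n : ℕ, (0 : ℝ) ≤ m ^ n * (1 / 4) ^ n :=
    fun n => mul_nonneg (pow_nonneg hm.1.le n) (by norm_num)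
  apply Summable.of_nonneg_of_le (fun n => mul_nonneg (hmn n) (Nat.cast_nonneg _))
    (fun n => ?_) (summable_geometric_of_lt_one hm.1.le hm.2)
  have hc : ((hitPaths a n (P n)).ncard : ℝ) ≤ (4 : ℝ) ^ n := by
    have := hitPaths_ncard_le a n (P n)
    exact_mod_cast this
  calc m ^ n * (1 / 4) ^ n * ((hitPaths a n (P n)).ncard : ℝ)
      ≤ m ^ n * (1 / 4) ^ n * (4 : ℝ) ^ n := by
        apply mul_le_mul_of_nonneg_left hc (hmn n)
    _ = m ^ n := by
        rw [mul_assoc, ← mul_pow]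
        norm_num

/-- Reflection identity for the massive hitting expectations of the simple random walk:
`E^a[m^τ 1_{τ<∞} 1_{X_{τ-1} ∈ {W,S}}] - E^a[m^τ 1_{τ<∞} 1_{X_{τ-1} ∈ {N,E}}]
  = -E^a[m^τ 1_{τ<∞} 1_{T=∞}]`. -/
theorem srw_reflection_identity
    (m : ℝ) (hm : m ∈ Set.Ioo (0 : ℝ) 1) (a : Site)
    (ha : a.1 ≤ a.2 ∧ 0 ≤ a.1) (ha0 : a ≠ 0) :
    hitExp m a (lastStepIn ({((-1 : ℤ), (0 : ℤ)), ((0 : ℤ), (-1 : ℤ))} : Set Site)) -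
        hitExp m a (lastStepIn ({((0 : ℤ), (1 : ℤ)), ((1 : ℤ), (0 : ℤ))} : Set Site)) =
      -hitExp m a noVisitDelta := by

  have hWS := summable_hit hm a (lastStepIn ({((-1 : ℤ), (0 : ℤ)), ((0 : ℤ), (-1 : ℤ))} : Set Site))
  have hC := summable_hit hm a noVisitDelta
  have hNEeq : hitExp m a (lastStepIn ({((0 : ℤ), (1 : ℤ)), ((1 : ℤ), (0 : ℤ))} : Set Site))
      = hitExp m a (lastStepIn ({((-1 : ℤ), (0 : ℤ)), ((0 : ℤ), (-1 : ℤ))} : Set Site))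
        + hitExp m a noVisitDelta := by
    unfold hitExp
    rw [← Summable.tsum_add hWS hC]
    apply tsum_congr
    intro n
    rw [← key_card a ha ha0 n]
    push_cast
    ring
  linarith
end
end

section
/- Let m ∈ (0,1). There exists a constant c > 0 (depending on m only) such that for every a = (a₁,a₂) ∈ ℤ² with a₂ ≥ a₁ ≥ 0 and a ≠ 0, the simple random walk started at a satisfies E^a[ m^τ · 1_{τ<∞} · 1_{T=∞} ] ≥ (c/|a|) · G_m(0,a), where τ is the hitting time of 0, T is the time of the last visit to the line Δ = {(x,y) : y = −x} strictly before τ (T = ∞ if there is none), and |a| is the Euclidean norm of a. -/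
open scoped Classical BigOperators

noncomputable section

/-- `n`-step transition probabilities of the simple random walk on `ℤ²`. -/
def srwProb : ℕ → Site → Site → ℝ
  | 0, x, y => if x = y then 1 else 0
  | n + 1, x, y => (1 / 4) *
      (srwProb n (x + (1, 0)) y + srwProb n (x - (1, 0)) y +
        srwProb n (x + (0, 1)) y + srwProb n (x - (0, 1)) y)

/-- The massive Green function `G_m(x,y) = Σ_n m^n P^x(X_n = y)`. -/
def green (m : ℝ) (x y : Site) : ℝ := ∑' n : ℕ, m ^ n * srwProb n x y

/-- Euclidean norm of a site. -/
def siteEnorm (a : Site) : ℝ := Real.sqrt ((a.1 : ℝ) ^ 2 + (a.2 : ℝ) ^ 2)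

/-!
In the coordinates `x + y` and `x - y` the simple random walk on `ℤ²` is a pair of independent
simple random walks on `ℤ`, and `Δ` is the zero set of the first one. So the walk from `a` hits
`0` at time `n` without visiting `Δ` before whenever its first coordinate makes a first passage
from `s = a₁ + a₂` to `0` at time `n` and its second coordinate is then at `0`. By Kemperman's
hitting time theorem the first passages are an `s / n` fraction of the paths from `s` to `0`,
so the `n`-th term of `E^a[m^τ; τ < ∞, T = ∞]` is at least `s / n` times the `n`-th term of
`G_m(0, a)`. The latter is at least `(m/4)^s` at `n = s` and decays like `mⁿ`, so the terms with
`n ≤ C s` carry half of `G_m(0, a)`, whence `G_m(0, a) ≤ 2C · E^a[…]`, and `|a| ≥ 1`.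
-/

theorem Fin.eq_of_zero_eq_of_sub_eq {G : Type*} [AddGroup G] {n : ℕ} {f g : Fin (n + 1) → G}
    (h0 : f 0 = g 0) (h : ∀ i : Fin n, f i.succ - f i.castSucc = g i.succ - g i.castSucc) :
    f = g := by
  funext j
  induction j using Fin.induction with
  | zero => exact h0
  | succ i ih => rw [← sub_add_cancel (f i.succ), h i, ih, sub_add_cancel]

theorem tsum_le_two_mul_sum_range {m q : ℝ} (hm0 : 0 ≤ m) (hm1 : m < 1) {g : ℕ → ℝ}
    (hg0 : ∀ n, 0 ≤ g n) (hgm : ∀ n, g n ≤ m ^ n) {K M S : ℕ} (hK : m ^ K ≤ q)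
    (hM : m ^ M ≤ (1 - m) / 2) (hS : q ^ S ≤ g S) :
    ∑' n, g n ≤ 2 * ∑ n ∈ Finset.range (K * S + M + 1), g n := by
  set N := K * S + M + 1
  have hgeom := summable_geometric_of_lt_one hm0 hm1
  have hsum : Summable g := .of_nonneg_of_le hg0 hgm hgeom
  have htail : ∑' n, g (n + N) ≤ m ^ N / (1 - m) :=
    calc ∑' n, g (n + N) ≤ ∑' n, m ^ N * m ^ n :=
          ((summable_nat_add_iff N).mpr hsum).tsum_le_tsum
            (fun n => (hgm _).trans_eq (by ring)) (hgeom.mul_left _)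
      _ = m ^ N / (1 - m) := by rw [tsum_mul_left, tsum_geometric_of_lt_one hm0 hm1, div_eq_mul_inv]
  have hqS : (m ^ K) ^ S ≤ q ^ S := pow_le_pow_left₀ (pow_nonneg hm0 K) hK S
  have hmN : m ^ N / (1 - m) ≤ g S / 2 := by
    rw [div_le_iff₀ (by linarith)]
    calc m ^ N = (m ^ K) ^ S * (m ^ M * m) := by ring
      _ ≤ q ^ S * ((1 - m) / 2) :=
          mul_le_mul hqS ((mul_le_of_le_one_right (pow_nonneg hm0 M) hm1.le).trans hM)
            (by positivity) ((pow_nonneg (pow_nonneg hm0 K) S).trans hqS)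
      _ ≤ g S / 2 * (1 - m) := by nlinarith
  have hgS : g S ≤ ∑' n, g n := hsum.le_tsum S fun n _ => hg0 n
  linarith [hsum.sum_add_tsum_nat_add N]

theorem mul_sum_range_le_mul_tsum {g h : ℕ → ℝ} {s : ℝ} (hh0 : ∀ n, 0 ≤ h n)
    (hh : Summable h) (hgh : ∀ n, s * g n = n * h n) (N : ℕ) :
    s * ∑ n ∈ Finset.range N, g n ≤ N * ∑' n, h n :=
  calc s * ∑ n ∈ Finset.range N, g n = ∑ n ∈ Finset.range N, (n : ℝ) * h n := by
        rw [Finset.mul_sum]; exact Finset.sum_congr rfl fun n _ => hgh n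
    _ ≤ ∑ n ∈ Finset.range N, (N : ℝ) * h n :=
        Finset.sum_le_sum fun n hn => by gcongr; exacts [hh0 n, (Finset.mem_range.mp hn).le]
    _ ≤ N * ∑' n, h n := by
        rw [← Finset.mul_sum]; gcongr; exact hh.sum_le_tsum _ fun n _ => hh0 n

namespace SRW

/-- `walkCount n k` is the number of `±1`-paths of length `n` from `k` to `0`, and
`firstPassageCount n k` the number of those that stay positive before time `n`. -/
def walkCount : ℕ → ℤ → ℕ
  | 0, k => if k = 0 then 1 else 0
  | n + 1, k => walkCount n (k - 1) + walkCount n (k + 1)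

def firstPassageCount : ℕ → ℤ → ℕ
  | 0, k => if k = 0 then 1 else 0
  | n + 1, k => if k ≤ 0 then 0 else firstPassageCount n (k - 1) + firstPassageCount n (k + 1)

theorem walkCount_le_two_pow (n : ℕ) (k : ℤ) : walkCount n k ≤ 2 ^ n := by
  induction n generalizing k with
  | zero => simp only [walkCount]; split <;> simp
  | succ n ih => simp only [walkCount, pow_succ]; linarith [ih (k - 1), ih (k + 1)]

theorem one_le_walkCount {n : ℕ} {k : ℤ} (hk : |k| ≤ n) (hpar : Even (n + k)) :
    1 ≤ walkCount n k := by
  induction n generalizing k with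
  | zero => simp [walkCount, abs_nonpos_iff.mp (by exact_mod_cast hk)]
  | succ n ih =>
    obtain ⟨j, hj⟩ := hpar
    rw [abs_le] at hk
    push_cast at hk hj
    rcases le_or_gt k 0 with hk0 | hk0
    · have := ih (k := k + 1) (abs_le.mpr ⟨by omega, by omega⟩) ⟨j, by omega⟩
      simp only [walkCount]; omega
    · have := ih (k := k - 1) (abs_le.mpr ⟨by omega, by omega⟩) ⟨j - 1, by omega⟩
      simp only [walkCount]; omega

/-- A path of length `x + y` from `(x, y)` to the origin. -/
theorem one_le_walkCount_mul_walkCount {x y : ℤ} (hx : 0 ≤ x) (hy : 0 ≤ y) :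
    1 ≤ walkCount (x + y).toNat (x + y) * walkCount (x + y).toNat (x - y) := by
  have hS : ((x + y).toNat : ℤ) = x + y := Int.toNat_of_nonneg (by omega)
  exact one_le_mul_of_one_le_of_one_le
    (one_le_walkCount (by rw [hS, abs_le]; omega) ⟨x + y, hS ▸ rfl⟩)
    (one_le_walkCount (by rw [hS, abs_le]; omega) ⟨x, by omega⟩)

theorem firstPassageCount_le_walkCount (n : ℕ) (k : ℤ) :
    firstPassageCount n k ≤ walkCount n k := by
  induction n generalizing k with
  | zero => simp [firstPassageCount, walkCount]
  | succ n ih =>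
    simp only [firstPassageCount, walkCount]
    split
    · omega
    · linarith [ih (k - 1), ih (k + 1)]

theorem walkCount_reflection (n : ℕ) (k : ℤ) :
    ((n : ℤ) - k + 1) * walkCount n (k - 1) = ((n : ℤ) + k + 1) * walkCount n (k + 1) := by
  induction n generalizing k with
  | zero => simp only [walkCount]; split_ifs <;> push_cast <;> omega
  | succ n ih =>
    simp only [walkCount]
    push_cast
    linear_combination (norm := ring_nf) ih (k - 1) + ih (k + 1)

/-- Kemperman's hitting time theorem for the simple random walk on `ℤ`. -/
theorem mul_firstPassageCount (n : ℕ) {k : ℤ} (hk : 0 ≤ k) :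
    (n : ℤ) * firstPassageCount n k = k * walkCount n k := by
  induction n generalizing k with
  | zero => simp only [firstPassageCount, walkCount]; split_ifs <;> simp_all
  | succ n ih =>
    rcases hk.eq_or_lt with rfl | hk
    · simp [firstPassageCount]
    rcases Nat.eq_zero_or_pos n with rfl | hn
    · simp only [firstPassageCount, walkCount]; split_ifs <;> push_cast <;> omega
    have hrec : firstPassageCount (n + 1) k =
        firstPassageCount n (k - 1) + firstPassageCount n (k + 1) := by
      simp only [firstPassageCount, if_neg hk.not_ge]
    have key : (n : ℤ) * (((n : ℤ) + 1) * firstPassageCount (n + 1) k - k * walkCount (n + 1) k)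
        = 0 := by
      simp only [hrec, walkCount]
      push_cast
      linear_combination ((n : ℤ) + 1) * ih (k := k - 1) (by omega) +
        ((n : ℤ) + 1) * ih (k := k + 1) (by omega) - walkCount_reflection n k
    push_cast
    linarith [(mul_eq_zero.mp key).resolve_left (by positivity)]

theorem srwProb_eq_walkCount_mul (n : ℕ) (x y : Site) :
    srwProb n x y = (1 / 4) ^ n * walkCount n (y.1 + y.2 - (x.1 + x.2)) *
      walkCount n (y.1 - y.2 - (x.1 - x.2)) := by
  induction n generalizing x with
  | zero =>
    simp only [srwProb, walkCount, pow_zero, one_mul]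
    by_cases h : x = y
    · simp [h]
    · have : ¬(y.1 + y.2 - (x.1 + x.2) = 0 ∧ y.1 - y.2 - (x.1 - x.2) = 0) := fun ⟨h1, h2⟩ =>
        h (Prod.ext (by omega) (by omega))
      split_ifs <;> simp_all
  | succ n ih =>
    simp only [srwProb, ih, walkCount, Prod.fst_add, Prod.snd_add, Prod.fst_sub, Prod.snd_sub]
    push_cast
    ring_nf

theorem green_nonneg {m : ℝ} (hm : 0 ≤ m) (x y : Site) : 0 ≤ green m x y :=
  tsum_nonneg fun n => by rw [srwProb_eq_walkCount_mul]; positivity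

theorem green_zero_eq_tsum (m : ℝ) (a : Site) :
    green m 0 a = ∑' n, m ^ n * (1 / 4) ^ n * walkCount n (a.1 + a.2) * walkCount n (a.1 - a.2) :=
  tsum_congr fun n => by
    simp only [srwProb_eq_walkCount_mul, Prod.fst_zero, Prod.snd_zero, add_zero, sub_zero]; ring

theorem pow_mul_walkCount_mul_walkCount_le {m : ℝ} (hm : 0 ≤ m) (n : ℕ) (k l : ℤ) :
    m ^ n * (1 / 4) ^ n * walkCount n k * walkCount n l ≤ m ^ n :=
  calc m ^ n * (1 / 4) ^ n * walkCount n k * walkCount n l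
      ≤ m ^ n * (1 / 4) ^ n * 2 ^ n * 2 ^ n := by
        gcongr <;> exact_mod_cast walkCount_le_two_pow n _
    _ = m ^ n := by rw [mul_assoc, mul_assoc, ← mul_pow, ← mul_pow]; norm_num

def unitSteps : Finset Site := {(1, 0), (-1, 0), (0, 1), (0, -1)}

theorem stepRel_iff_sub_mem {u v : Site} : stepRel u v ↔ v - u ∈ unitSteps := by
  simp only [stepRel, unitSteps, Finset.mem_insert, Finset.mem_singleton, Prod.ext_iff,
    Prod.fst_add, Prod.snd_add, Prod.fst_sub, Prod.snd_sub]
  omega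

section HitPaths

variable (a : Site) (n : ℕ) (P : (Fin (n + 1) → Site) → Prop)

theorem mapsTo_hitPaths_increments :
    Set.MapsTo (fun f (i : Fin n) => f i.succ - f i.castSucc) (hitPaths a n P)
      ↑(Fintype.piFinset fun _ : Fin n => unitSteps) := fun _ hf => by
  simpa [stepRel_iff_sub_mem] using hf.2.1

theorem injOn_hitPaths_increments :
    Set.InjOn (fun f (i : Fin n) => f i.succ - f i.castSucc) (hitPaths a n P) :=
  fun _ hf _ hg h => Fin.eq_of_zero_eq_of_sub_eq (hf.1.trans hg.1.symm) (congrFun h)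

theorem hitPaths_finite : (hitPaths a n P).Finite :=
  Set.Finite.of_injOn (mapsTo_hitPaths_increments a n P) (injOn_hitPaths_increments a n P)
    (Finset.finite_toSet _)

theorem ncard_hitPaths_le : (hitPaths a n P).ncard ≤ 4 ^ n := by
  calc (hitPaths a n P).ncard
      ≤ (↑(Fintype.piFinset fun _ : Fin n => unitSteps) : Set (Fin n → Site)).ncard :=
        Set.ncard_le_ncard_of_injOn _ (mapsTo_hitPaths_increments a n P)
          (injOn_hitPaths_increments a n P) (Finset.finite_toSet _)
    _ = 4 ^ n := by rw [Set.ncard_coe_finset, Fintype.card_piFinset_const]; rfl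

end HitPaths

theorem cons_mem_hitPaths {a d : Site} (hd : d ∈ unitSteps) (ha : a.2 ≠ -a.1) {n : ℕ}
    {g : Fin (n + 1) → Site} (hg : g ∈ hitPaths (a + d) n (noVisitDelta n)) :
    (Fin.cons a g : Fin (n + 2) → Site) ∈ hitPaths a (n + 1) (noVisitDelta (n + 1)) := by
  obtain ⟨g0, gstep, glast, gne, gΔ⟩ := hg
  have ha0 : a ≠ 0 := by rintro rfl; simp at ha
  simp only [hitPaths, noVisitDelta, Set.mem_ofPred_eq, Fin.forall_fin_succ, Fin.castSucc_zero,
    Fin.cons_zero, Fin.cons_succ, ← Fin.succ_castSucc, ← Fin.succ_last, g0]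
  exact ⟨trivial, ⟨stepRel_iff_sub_mem.mpr (by simpa using hd), gstep⟩, glast, ⟨ha0, gne⟩,
    ha, gΔ⟩

theorem sum_ncard_hitPaths_le {a : Site} (ha : a.2 ≠ -a.1) (n : ℕ) :
    ∑ d ∈ unitSteps, (hitPaths (a + d) n (noVisitDelta n)).ncard ≤
      (hitPaths a (n + 1) (noVisitDelta (n + 1))).ncard := by
  set cons : (Fin (n + 1) → Site) → Fin (n + 2) → Site := fun g => Fin.cons a g
  have hinj : Function.Injective cons := Fin.cons_right_injective (α := fun _ => Site) a
  have hdisj : (unitSteps : Set Site).PairwiseDisjoint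
      fun d => cons '' hitPaths (a + d) n (noVisitDelta n) := by
    intro d _ d' _ hne
    refine Set.disjoint_left.mpr ?_
    rintro _ ⟨g, hg, rfl⟩ ⟨g', hg', heq⟩
    obtain rfl := hinj heq
    exact hne (add_left_cancel (hg.1.symm.trans hg'.1))
  calc ∑ d ∈ unitSteps, (hitPaths (a + d) n (noVisitDelta n)).ncard
      = ∑ d ∈ unitSteps, (cons '' hitPaths (a + d) n (noVisitDelta n)).ncard := by
        simp only [Set.ncard_image_of_injective _ hinj]
    _ = (⋃ d ∈ (unitSteps : Set Site), cons '' hitPaths (a + d) n (noVisitDelta n)).ncard := by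
        rw [Set.Finite.ncard_biUnion (Finset.finite_toSet _)
          (fun d _ => (hitPaths_finite _ _ _).image _) hdisj, finsum_mem_coe_finset]
    _ ≤ (hitPaths a (n + 1) (noVisitDelta (n + 1))).ncard :=
        Set.ncard_le_ncard (Set.iUnion₂_subset fun _ hd => Set.image_subset_iff.mpr
          fun _ hg => cons_mem_hitPaths hd ha hg) (hitPaths_finite _ _ _)

theorem firstPassageCount_mul_walkCount_le (n : ℕ) (a : Site) :
    firstPassageCount n (a.1 + a.2) * walkCount n (a.1 - a.2) ≤
      (hitPaths a n (noVisitDelta n)).ncard := by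
  induction n generalizing a with
  | zero =>
    by_cases ha : a = 0
    · subst ha
      have hconst : (fun _ => 0 : Fin 1 → Site) ∈ hitPaths 0 0 (noVisitDelta 0) := by
        simp [hitPaths, noVisitDelta]
      calc firstPassageCount 0 (0 + 0) * walkCount 0 (0 - 0) = 1 := rfl
        _ ≤ (hitPaths 0 0 (noVisitDelta 0)).ncard :=
          (Set.ncard_pos (hitPaths_finite _ _ _)).mpr ⟨_, hconst⟩
    · simp only [firstPassageCount, walkCount]
      simp only [Prod.ext_iff, Prod.fst_zero, Prod.snd_zero] at ha
      split_ifs <;> omega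
  | succ n ih =>
    rcases le_or_gt (a.1 + a.2) 0 with hs | hs
    · simp [firstPassageCount, hs]
    calc firstPassageCount (n + 1) (a.1 + a.2) * walkCount (n + 1) (a.1 - a.2)
        = ∑ d ∈ unitSteps, firstPassageCount n ((a + d).1 + (a + d).2) *
            walkCount n ((a + d).1 - (a + d).2) := by
          rw [unitSteps, Finset.sum_insert (by decide), Finset.sum_insert (by decide),
            Finset.sum_insert (by decide), Finset.sum_singleton]
          simp only [firstPassageCount, walkCount, if_neg hs.not_ge, Prod.fst_add, Prod.snd_add]
          ring_nf
      _ ≤ ∑ d ∈ unitSteps, (hitPaths (a + d) n (noVisitDelta n)).ncard :=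
          Finset.sum_le_sum fun d _ => ih (a + d)
      _ ≤ (hitPaths a (n + 1) (noVisitDelta (n + 1))).ncard :=
          sum_ncard_hitPaths_le (by omega) n

theorem tsum_le_hitExp {m : ℝ} (hm0 : 0 ≤ m) (hm1 : m < 1) {a : Site}
    {P : ∀ n : ℕ, (Fin (n + 1) → Site) → Prop} {u : ℕ → ℝ} (hu : Summable u)
    (h : ∀ n, u n ≤ m ^ n * (1 / 4) ^ n * (hitPaths a n (P n)).ncard) :
    ∑' n, u n ≤ hitExp m a P := by
  have hterm (n : ℕ) : m ^ n * (1 / 4) ^ n * (hitPaths a n (P n)).ncard ≤ m ^ n :=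
    calc m ^ n * (1 / 4) ^ n * (hitPaths a n (P n)).ncard ≤ m ^ n * (1 / 4) ^ n * 4 ^ n := by
          gcongr; exact_mod_cast ncard_hitPaths_le a n (P n)
      _ = m ^ n := by rw [mul_assoc, ← mul_pow]; norm_num
  exact hu.tsum_le_tsum h <| .of_nonneg_of_le (fun n => by positivity) hterm
    (summable_geometric_of_lt_one hm0 hm1)

theorem summable_pow_mul_firstPassageCount_mul_walkCount {m : ℝ} (hm0 : 0 ≤ m) (hm1 : m < 1)
    (k l : ℤ) :
    Summable fun n => m ^ n * (1 / 4) ^ n * firstPassageCount n k * walkCount n l :=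
  .of_nonneg_of_le (fun n => by positivity)
    (fun n => le_trans (by gcongr; exact_mod_cast firstPassageCount_le_walkCount n k)
      (pow_mul_walkCount_mul_walkCount_le hm0 n k l))
    (summable_geometric_of_lt_one hm0 hm1)

theorem tsum_firstPassageCount_le_hitExp {m : ℝ} (hm0 : 0 ≤ m) (hm1 : m < 1) (a : Site) :
    ∑' n, m ^ n * (1 / 4) ^ n * firstPassageCount n (a.1 + a.2) * walkCount n (a.1 - a.2) ≤
      hitExp m a noVisitDelta :=
  tsum_le_hitExp hm0 hm1 (summable_pow_mul_firstPassageCount_mul_walkCount hm0 hm1 _ _)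
    fun n => by rw [mul_assoc]; gcongr; exact_mod_cast firstPassageCount_mul_walkCount_le n a

theorem one_le_siteEnorm {a : Site} (ha : a ≠ 0) : 1 ≤ siteEnorm a := by
  have : (1 : ℤ) ≤ a.1 ^ 2 + a.2 ^ 2 := by
    rcases a with ⟨x, y⟩
    simp only [ne_eq, Prod.mk_eq_zero, not_and_or] at ha
    rcases ha with hx | hy
    · nlinarith [pow_pos (abs_pos.mpr hx) 2, sq_abs x, sq_nonneg y]
    · nlinarith [pow_pos (abs_pos.mpr hy) 2, sq_abs y, sq_nonneg x]
  exact Real.one_le_sqrt.mpr (by exact_mod_cast this)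

theorem exists_green_le_mul_hitExp {m : ℝ} (hm0 : 0 < m) (hm1 : m < 1) :
    ∃ C > 0, ∀ a : Site, 0 ≤ a.1 → 0 ≤ a.2 → 0 < a.1 + a.2 →
      green m 0 a ≤ C * hitExp m a noVisitDelta := by
  obtain ⟨K, hK⟩ := exists_pow_lt_of_lt_one (by positivity : 0 < m / 4) hm1
  obtain ⟨M, hM⟩ := exists_pow_lt_of_lt_one (by linarith : 0 < (1 - m) / 2) hm1
  refine ⟨2 * (K + M + 1), by positivity, fun a h1 h2 hs => ?_⟩
  set s := a.1 + a.2
  set v := a.1 - a.2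
  set S := s.toNat
  have hSs : (S : ℤ) = s := Int.toNat_of_nonneg hs.le
  set g : ℕ → ℝ := fun n => m ^ n * (1 / 4) ^ n * walkCount n s * walkCount n v
  set h : ℕ → ℝ := fun n => m ^ n * (1 / 4) ^ n * firstPassageCount n s * walkCount n v
  have hgS : (m / 4) ^ S ≤ g S := by
    have hW : (1 : ℝ) ≤ walkCount S s * walkCount S v := by
      exact_mod_cast (one_le_walkCount_mul_walkCount h1 h2 : 1 ≤ walkCount S s * walkCount S v)
    calc (m / 4) ^ S = m ^ S * (1 / 4) ^ S * 1 := by ring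
      _ ≤ g S := by simp only [g, mul_assoc]; gcongr
  have hhalf := tsum_le_two_mul_sum_range hm0.le hm1 (fun n => by positivity)
    (pow_mul_walkCount_mul_walkCount_le hm0.le · s v) hK.le hM.le hgS
  have hgh (n : ℕ) : (s : ℝ) * g n = n * h n := by
    have hkem : (n : ℝ) * firstPassageCount n s = s * walkCount n s := by
      exact_mod_cast mul_firstPassageCount n hs.le
    simp only [g, h]
    linear_combination (-(m ^ n * (1 / 4) ^ n * walkCount n v)) * hkem
  have hcut := mul_sum_range_le_mul_tsum (fun n => by positivity)
    (summable_pow_mul_firstPassageCount_mul_walkCount hm0.le hm1 s v) hgh (K * S + M + 1)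
  have hN : ((K * S + M + 1 : ℕ) : ℝ) ≤ (K + M + 1) * s := by
    have hS1 : (1 : ℝ) ≤ S := by exact_mod_cast (by omega : 1 ≤ S)
    rw [← hSs]
    push_cast
    nlinarith
  have hsR : (0 : ℝ) < s := by exact_mod_cast hs
  refine le_of_mul_le_mul_left ?_ hsR
  calc (s : ℝ) * green m 0 a ≤ s * (2 * ∑ n ∈ Finset.range (K * S + M + 1), g n) := by
        rw [green_zero_eq_tsum]; gcongr
    _ = 2 * (s * ∑ n ∈ Finset.range (K * S + M + 1), g n) := by ring
    _ ≤ 2 * (((K * S + M + 1 : ℕ) : ℝ) * ∑' n, h n) := by gcongr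
    _ ≤ 2 * ((K + M + 1) * s * hitExp m a noVisitDelta) := by
        gcongr; exact tsum_firstPassageCount_le_hitExp hm0.le hm1 a
    _ = s * (2 * (K + M + 1) * hitExp m a noVisitDelta) := by ring

end SRW

open SRW in
/-- Lower bound on the restricted massive hitting expectation in terms of the massive
Green function: `E^a[m^τ 1_{τ<∞} 1_{T=∞}] ≥ (c/|a|) G_m(0,a)`. -/
theorem srw_massive_hitting_lower_bound
    (m : ℝ) (hm : m ∈ Set.Ioo (0 : ℝ) 1) :
    ∃ c > (0 : ℝ), ∀ a : Site, a.1 ≤ a.2 → 0 ≤ a.1 → a ≠ 0 →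
      (c / siteEnorm a) * green m (0, 0) a ≤ hitExp m a noVisitDelta := by
  obtain ⟨C, hC, hle⟩ := exists_green_le_mul_hitExp hm.1 hm.2
  refine ⟨C⁻¹, inv_pos.mpr hC, fun a h12 h01 ha => ?_⟩
  have hs : 0 < a.1 + a.2 := by
    simp only [ne_eq, Prod.ext_iff, Prod.fst_zero, Prod.snd_zero] at ha
    omega
  calc C⁻¹ / siteEnorm a * green m (0, 0) a ≤ C⁻¹ * green m 0 a :=
        mul_le_mul_of_nonneg_right (div_le_self (inv_nonneg.mpr hC.le) (one_le_siteEnorm ha))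
          (green_nonneg hm.1.le _ _)
    _ ≤ hitExp m a noVisitDelta := by
        rw [inv_mul_le_iff₀ hC]; exact hle a h01 (h01.trans h12) hs
end
end
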